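/- arXiv:0809.1552 — 3 statements merged into one kernel-verified Lean document; each statement's English description precedes it below -/
import Mathlib

section
/- (Split–Split, right) For every type X, every step function f : S X and rationals a, b, c strictly between 0 and 1, if a + b − a·b = c then splitR (splitR f a) b ≍ splitR f c, where ≍ is the lifted equality relation on S X. -/
set_option linter.unusedVariables false

/-- Rationals strictly between 0 and 1. -/
abbrev OO : Type := {q : ℚ // 0 < q ∧ q < 1}

/-- Rational step functions on the unit interval with values in `X`. -/
inductive S (X : Type) : Type
  | const : X → S X
  | glue : OO → S X → S X → S X

namespace S

def divO (a o : OO) (h : a.1 < o.1) : OO :=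
  ⟨a.1 / o.1, div_pos a.2.1 o.2.1, (div_lt_one o.2.1).2 h⟩

def subO (a o : OO) (h : o.1 < a.1) : OO :=
  ⟨(a.1 - o.1) / (1 - o.1),
    div_pos (by linarith) (by linarith [o.2.2]),
    (div_lt_one (by linarith [o.2.2])).2 (by linarith [a.2.2])⟩

/-- Left split: the part of the step function on `[0,a]`, rescaled to `[0,1]`. -/
def splitL {X : Type} : S X → OO → S X
  | const x, _ => const x
  | glue o f g, a =>
      if h : a.1 < o.1 then splitL f (divO a o h)
      else if h' : o.1 < a.1 then glue (divO o a h') f (splitL g (subO a o h'))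
      else f

/-- Right split: the part of the step function on `[a,1]`, rescaled to `[0,1]`. -/
def splitR {X : Type} : S X → OO → S X
  | const x, _ => const x
  | glue o f g, a =>
      if h : a.1 < o.1 then glue (subO o a h) (splitR f (divO a o h)) g
      else if h' : o.1 < a.1 then splitR g (subO a o h')
      else g

/-- The catamorphism (fold) for step functions. -/
def fold {X Y : Type} (φ : X → Y) (ψ : OO → Y → Y → Y) : S X → Y
  | const x => φ x
  | glue o f g => ψ o (fold φ ψ f) (fold φ ψ g)

/-- `map` for step functions. -/
def mapS {X Y : Type} (f : X → Y) : S X → S Y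
  | const x => const (f x)
  | glue o l r => glue o (mapS f l) (mapS f r)

/-- The applicative `ap` (pointwise application) for step functions. -/
def ap {X Y : Type} : S (X → Y) → S X → S Y
  | const f, x => mapS f x
  | glue o fl fr, x => glue o (ap fl (splitL x o)) (ap fr (splitR x o))

/-- Binary map. -/
def map2 {X Y Z : Type} (f : X → Y → Z) (a : S X) (b : S Y) : S Z :=
  ap (mapS f a) b

/-- `fold⋆`: a step function of propositions holds everywhere. -/
def foldStar : S Prop → Prop := fold id (fun _ p q => p ∧ q)

/-- Lifting of a relation to step functions: it holds pointwise everywhere. -/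
def liftRel {X Y : Type} (R : X → Y → Prop) (f : S X) (g : S Y) : Prop :=
  foldStar (map2 R f g)

/-- The equivalence `≍` on step functions: the lifting of equality. -/
def equivS {X : Type} (f g : S X) : Prop := liftRel Eq f g

def foldSup : S ℚ → ℚ := fold id (fun _ x y => max x y)

def foldAffine : S ℚ → ℚ := fold id (fun o x y => o.1 * x + (1 - o.1) * y)

def normInf (f : S ℚ) : ℚ := foldSup (mapS (fun q => |q|) f)

def normOne (f : S ℚ) : ℚ := foldAffine (mapS (fun q => |q|) f)

def dInf (f g : S ℚ) : ℚ := normInf (map2 (· - ·) f g)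

def dOne (f g : S ℚ) : ℚ := normOne (map2 (· - ·) f g)

end S

open S

/-!
`splitR f a` is `f` restricted to `[a, 1]` and rescaled by `t ↦ a + (1 - a) t`. Composing two such
rescalings gives `t ↦ c + (1 - c) t` with `c = a + b - a b`, so `splitR (splitR f a) b` and
`splitR f c` are even equal as trees. Along the induction, a breakpoint `o > a` of `f` becomes
the breakpoint `(o - a) / (1 - a)` of `splitR f a`, and `c - o = (1 - a) (b - (o - a) / (1 - a))`,
so `b` lies on the same side of the new breakpoint as `c` does of `o`.
-/

namespace S

variable {X : Type}

theorem splitL_glue_self (o : OO) (l r : S X) : splitL (glue o l r) o = l := by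
  simp [splitL]

theorem splitR_glue_self (o : OO) (l r : S X) : splitR (glue o l r) o = r := by
  simp [splitR]

theorem splitR_glue_of_lt {a o : OO} (h : a.1 < o.1) (l r : S X) :
    splitR (glue o l r) a = glue (subO o a h) (splitR l (divO a o h)) r := by
  rw [splitR, dif_pos h]

theorem splitR_glue_of_gt {a o : OO} (h : o.1 < a.1) (l r : S X) :
    splitR (glue o l r) a = splitR r (subO a o h) := by
  rw [splitR, dif_neg h.not_gt, dif_pos h]

section liftRel

variable {Y Z : Type}

theorem map2_glue_glue (R : X → Y → Z) (o : OO) (l r : S X) (l' r' : S Y) :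
    map2 R (glue o l r) (glue o l' r') = glue o (map2 R l l') (map2 R r r') := by
  simp only [map2, mapS, ap, splitL_glue_self, splitR_glue_self]

theorem liftRel_glue_glue (R : X → Y → Prop) (o : OO) (l r : S X) (l' r' : S Y) :
    liftRel R (glue o l r) (glue o l' r') ↔ liftRel R l l' ∧ liftRel R r r' := by
  simp only [liftRel, map2_glue_glue]
  rfl

theorem liftRel_refl {R : X → X → Prop} (hR : ∀ x, R x x) (f : S X) : liftRel R f f := by
  induction f with
  | const x => exact hR x
  | glue o l r ihl ihr => exact (liftRel_glue_glue R o l r l r).2 ⟨ihl, ihr⟩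

theorem equivS_refl (f : S X) : equivS f f :=
  liftRel_refl (fun _ => rfl) f

end liftRel

section splitR

variable {a b c o : OO}

theorem sub_eq_mul_sub_subO (hao : a.1 < o.1) (h : a.1 + b.1 - a.1 * b.1 = c.1) :
    c.1 - o.1 = (1 - a.1) * (b.1 - (subO o a hao).1) := by
  have : 1 - a.1 ≠ 0 := by linarith [a.2.2]
  simp only [subO]
  field_simp
  linear_combination -h

theorem subO_subO_of_lt (hao : a.1 < o.1) (hb : b.1 < (subO o a hao).1) (hc : c.1 < o.1)
    (h : a.1 + b.1 - a.1 * b.1 = c.1) : subO (subO o a hao) b hb = subO o c hc := by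
  have : 1 - a.1 ≠ 0 := by linarith [a.2.2]
  have : 1 - c.1 = (1 - a.1) * (1 - b.1) := by rw [← h]; ring
  apply Subtype.ext
  simp only [subO]
  rw [this, ← h]
  field_simp
  ring

theorem divO_add_divO (hao : a.1 < o.1) (hb : b.1 < (subO o a hao).1) (hc : c.1 < o.1)
    (h : a.1 + b.1 - a.1 * b.1 = c.1) :
    (divO a o hao).1 + (divO b _ hb).1 - (divO a o hao).1 * (divO b _ hb).1 = (divO c o hc).1 := by
  have : 1 - a.1 ≠ 0 := by linarith [a.2.2]
  have : o.1 - a.1 ≠ 0 := (sub_pos.2 hao).ne'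
  have : o.1 ≠ 0 := o.2.1.ne'
  simp only [subO, divO, ← h]
  field_simp
  ring

theorem subO_subO_of_gt (hao : a.1 < o.1) (hb : (subO o a hao).1 < b.1) (hc : o.1 < c.1)
    (h : a.1 + b.1 - a.1 * b.1 = c.1) : subO b (subO o a hao) hb = subO c o hc := by
  have : 1 - a.1 ≠ 0 := by linarith [a.2.2]
  have : 1 - o.1 ≠ 0 := by linarith [o.2.2]
  have : 1 - (o.1 - a.1) / (1 - a.1) = (1 - o.1) / (1 - a.1) := by field_simp; ring
  apply Subtype.ext
  simp only [subO, this, ← h]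
  field_simp
  ring

theorem subO_of_add_sub_mul (hc : a.1 < c.1) (h : a.1 + b.1 - a.1 * b.1 = c.1) :
    subO c a hc = b := by
  have : 1 - a.1 ≠ 0 := by linarith [a.2.2]
  apply Subtype.ext
  simp only [subO]
  field_simp
  linear_combination -h

theorem subO_add_sub_mul (hoa : o.1 < a.1) (hc : o.1 < c.1) (h : a.1 + b.1 - a.1 * b.1 = c.1) :
    (subO a o hoa).1 + b.1 - (subO a o hoa).1 * b.1 = (subO c o hc).1 := by
  have : 1 - o.1 ≠ 0 := by linarith [o.2.2]
  simp only [subO]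
  field_simp
  linear_combination h

theorem splitR_splitR (f : S X) {a b c : OO} (h : a.1 + b.1 - a.1 * b.1 = c.1) :
    splitR (splitR f a) b = splitR f c := by
  induction f generalizing a b c with
  | const x => rfl
  | glue o l r ihl ihr =>
    have hac : a.1 < c.1 := by
      rw [← h]; linarith [mul_pos b.2.1 (sub_pos.2 a.2.2)]
    rcases lt_trichotomy a.1 o.1 with hao | hao | hoa
    · have hco := sub_eq_mul_sub_subO hao h
      have ha : 0 < 1 - a.1 := sub_pos.2 a.2.2
      rw [splitR_glue_of_lt hao]
      rcases lt_trichotomy b.1 (subO o a hao).1 with hb | hb | hb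
      · have hc : c.1 < o.1 := by linarith [mul_neg_of_pos_of_neg ha (sub_neg.2 hb)]
        rw [splitR_glue_of_lt hb, splitR_glue_of_lt hc, subO_subO_of_lt hao hb hc h,
          ihl (divO_add_divO hao hb hc h)]
      · have hc : c = o := Subtype.ext (by rw [hb, sub_self, mul_zero] at hco; linarith)
        rw [Subtype.ext hb, hc, splitR_glue_self, splitR_glue_self]
      · have hc : o.1 < c.1 := by linarith [mul_pos ha (sub_pos.2 hb)]
        rw [splitR_glue_of_gt hb, splitR_glue_of_gt hc, subO_subO_of_gt hao hb hc h]
    · obtain rfl : a = o := Subtype.ext hao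
      rw [splitR_glue_self, splitR_glue_of_gt hac, subO_of_add_sub_mul hac h]
    · have hc : o.1 < c.1 := hoa.trans hac
      rw [splitR_glue_of_gt hoa, splitR_glue_of_gt hc, ihr (subO_add_sub_mul hoa hc h)]

end splitR

end S

/-- Split–Split, right: if `a + b − a·b = c` then `splitR (splitR f a) b ≍ splitR f c`. -/
theorem splitR_splitR_equiv {X : Type} (f : S X) (a b c : OO)
    (h : a.1 + b.1 - a.1 * b.1 = c.1) :
    equivS (splitR (splitR f a) b) (splitR f c) :=
  splitR_splitR f h ▸ equivS_refl _
end

section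
/- (Combinators are preserved) For all types X, Y, Z, the combinators C, K and W are preserved by the step-function applicative functor up to the equivalence ≍: for all f : S (X → Y → Z), x : S X, y : S Y, g : S (X → X → Y): (C) const (fun h a b => h b a) @ f @ y' @ x' ≍ f @ x' @ y' for all x' : S X, y' : S Y; (K) const (fun a b => a) @ x @ y ≍ x after application, i.e. map (fun a b => a) x @ y ≍ x; (W) const (fun h a => h a a) @ g @ x ≍ g @ x @ x; in each case ≍ is the lifted equality relation on step functions of the appropriate value type. -/
set_option linter.unusedVariables false

open S

/-!
Evaluate a step function at a point `q ∈ (0, 1]`, the piece `glue o l r` being `l` rescaled to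
`(0, o]` and `r` rescaled to `(o, 1]`. The splits are then the restrictions to `(0, a]` and
`(a, 1]`, rescaled back to `(0, 1]`, so `ap` is pointwise application. A `foldStar` holds as
soon as its step function of propositions holds at every point, since a piece of a `glue`
evaluates like the whole `glue` at a rescaled point. Hence `≍` follows from pointwise
equality, and each law reduces to the defining equation of its combinator.
-/

open Set

namespace S

def eval {X : Type} : S X → ℚ → X
  | const x, _ => x
  | glue o l r, q => if q ≤ o.1 then eval l (q / o.1) else eval r ((q - o.1) / (1 - o.1))

section Eval

variable {X : Type} {q : ℚ}

@[simp]
lemma eval_const (x : X) (q : ℚ) : eval (const x) q = x := rfl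

lemma eval_glue_of_le {o : OO} (l r : S X) (h : q ≤ o.1) :
    eval (glue o l r) q = eval l (q / o.1) := if_pos h

lemma eval_glue_of_lt {o : OO} (l r : S X) (h : o.1 < q) :
    eval (glue o l r) q = eval r ((q - o.1) / (1 - o.1)) := if_neg h.not_ge

lemma eval_mapS {Y : Type} (f : X → Y) (x : S X) (q : ℚ) :
    eval (mapS f x) q = f (eval x q) := by
  induction x generalizing q with
  | const a => rfl
  | glue o l r ihl ihr =>
    simp only [mapS, eval]
    split_ifs
    · exact ihl _
    · exact ihr _

lemma div_mem_Ioc (o : OO) (hq : q ∈ Ioc 0 1) (h : q ≤ o.1) : q / o.1 ∈ Ioc 0 1 :=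
  ⟨div_pos hq.1 o.2.1, (div_le_one o.2.1).2 h⟩

lemma sub_div_sub_mem_Ioc (o : OO) (hq : q ∈ Ioc 0 1) (h : o.1 < q) :
    (q - o.1) / (1 - o.1) ∈ Ioc 0 1 :=
  ⟨div_pos (by linarith) (by linarith [o.2.2]),
    (div_le_one (by linarith [o.2.2])).2 (by linarith [hq.2])⟩

lemma mul_mem_Ioc (a : OO) (hq : q ∈ Ioc 0 1) : a.1 * q ∈ Ioc 0 1 :=
  ⟨mul_pos a.2.1 hq.1, by nlinarith [a.2.2, hq.2, hq.1]⟩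

lemma add_mul_sub_mem_Ioc (a : OO) (hq : q ∈ Ioc 0 1) : a.1 + q * (1 - a.1) ∈ Ioc 0 1 :=
  ⟨by nlinarith [a.2.1, a.2.2, hq.1], by nlinarith [a.2.2, hq.2]⟩

lemma eval_splitL (x : S X) (a : OO) (hq : q ∈ Ioc 0 1) :
    eval (splitL x a) q = eval x (a.1 * q) := by
  induction x generalizing a q with
  | const => rfl
  | glue o l r ihl ihr =>
    obtain ⟨ho0, ho1⟩ := o.2
    obtain ⟨ha0, ha1⟩ := a.2
    obtain ⟨hq0, hq1⟩ := id hq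
    rcases lt_trichotomy a.1 o.1 with h | h | h
    · rw [splitL, dif_pos h, ihl _ hq, eval_glue_of_le _ _ (by nlinarith)]
      congr 1
      simp only [divO]
      ring
    · rw [splitL, dif_neg (by simp [h]), dif_neg (by simp [h]), eval_glue_of_le _ _ (by nlinarith), h,
        mul_div_cancel_left₀ _ ho0.ne']
    · rw [splitL, dif_neg (not_lt.2 h.le), dif_pos h]
      by_cases hc : a.1 * q ≤ o.1
      · have hle : q ≤ (divO o a h).1 := (le_div_iff₀' ha0).2 hc
        rw [eval_glue_of_le _ _ hle, eval_glue_of_le _ _ hc]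
        congr 1
        simp only [divO]
        field_simp
      · have hlt : (divO o a h).1 < q := (div_lt_iff₀' ha0).2 (not_le.1 hc)
        rw [eval_glue_of_lt _ _ hlt, eval_glue_of_lt _ _ (not_le.1 hc),
          ihr _ (sub_div_sub_mem_Ioc _ hq hlt)]
        congr 1
        have : a.1 ≠ 0 := ha0.ne'
        have : a.1 - o.1 ≠ 0 := by linarith
        have : (1 : ℚ) - o.1 ≠ 0 := by linarith
        simp only [divO, subO]
        field_simp

lemma eval_splitR (x : S X) (a : OO) (hq : q ∈ Ioc 0 1) :
    eval (splitR x a) q = eval x (a.1 + q * (1 - a.1)) := by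
  induction x generalizing a q with
  | const => rfl
  | glue o l r ihl ihr =>
    obtain ⟨ho0, ho1⟩ := o.2
    obtain ⟨ha0, ha1⟩ := a.2
    obtain ⟨hq0, hq1⟩ := id hq
    have : (1 : ℚ) - a.1 ≠ 0 := by linarith
    have : (1 : ℚ) - o.1 ≠ 0 := by linarith
    rcases lt_trichotomy a.1 o.1 with h | h | h
    · rw [splitR, dif_pos h]
      have : o.1 - a.1 ≠ 0 := by linarith
      have hiff : q ≤ (subO o a h).1 ↔ a.1 + q * (1 - a.1) ≤ o.1 := by
        rw [subO, le_div_iff₀ (by linarith)]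
        constructor <;> intro <;> linarith
      by_cases hc : a.1 + q * (1 - a.1) ≤ o.1
      · rw [eval_glue_of_le _ _ (hiff.2 hc), eval_glue_of_le _ _ hc,
          ihl _ (div_mem_Ioc _ hq (hiff.2 hc))]
        congr 1
        simp only [divO, subO]
        field_simp
      · have hlt := not_le.1 (mt hiff.1 hc)
        rw [eval_glue_of_lt _ _ hlt, eval_glue_of_lt _ _ (not_le.1 hc)]
        have hcompl : 1 - (o.1 - a.1) / (1 - a.1) = (1 - o.1) / (1 - a.1) := by
          field_simp
          ring
        congr 1
        simp only [subO, hcompl]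
        field_simp
        ring
    · rw [splitR, dif_neg (by simp [h]), dif_neg (by simp [h]),
        eval_glue_of_lt _ _ (by nlinarith), h]
      congr 1
      field_simp
      ring
    · rw [splitR, dif_neg (not_lt.2 h.le), dif_pos h, ihr _ hq,
        eval_glue_of_lt _ _ (by nlinarith)]
      congr 1
      simp only [subO]
      field_simp
      ring

lemma eval_ap {Y : Type} (f : S (X → Y)) (x : S X) (hq : q ∈ Ioc 0 1) :
    eval (ap f x) q = eval f q (eval x q) := by
  induction f generalizing x q with
  | const f => exact eval_mapS f x q
  | glue o fl fr ihl ihr =>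
    obtain ⟨ho0, ho1⟩ := o.2
    rcases le_or_gt q o.1 with hc | hc
    · rw [ap, eval_glue_of_le _ _ hc, eval_glue_of_le _ _ hc, ihl _ (div_mem_Ioc _ hq hc),
        eval_splitL _ _ (div_mem_Ioc _ hq hc), mul_div_cancel₀ _ ho0.ne']
    · have : (1 : ℚ) - o.1 ≠ 0 := by linarith
      rw [ap, eval_glue_of_lt _ _ hc, eval_glue_of_lt _ _ hc,
        ihr _ (sub_div_sub_mem_Ioc _ hq hc), eval_splitR _ _ (sub_div_sub_mem_Ioc _ hq hc),
        div_mul_cancel₀ _ this, add_sub_cancel]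

end Eval

lemma foldStar_of_forall_eval (p : S Prop) (h : ∀ q ∈ Ioc (0 : ℚ) 1, eval p q) :
    foldStar p := by
  induction p with
  | const P => exact h 1 ⟨one_pos, le_rfl⟩
  | glue o l r ihl ihr =>
    obtain ⟨ho0, ho1⟩ := o.2
    refine ⟨ihl fun q hq => ?_, ihr fun q hq => ?_⟩
    · have hle : o.1 * q ≤ o.1 := mul_le_of_le_one_right ho0.le hq.2
      simpa only [eval_glue_of_le _ _ hle, mul_div_cancel_left₀ q ho0.ne'] using
        h _ (mul_mem_Ioc o hq)
    · have hlt : o.1 < o.1 + q * (1 - o.1) := lt_add_of_pos_right _ (by nlinarith [hq.1])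
      have hrescale : (o.1 + q * (1 - o.1) - o.1) / (1 - o.1) = q := by
        rw [add_sub_cancel_left, mul_div_cancel_right₀ _ (by linarith)]
      simpa only [eval_glue_of_lt _ _ hlt, hrescale] using h _ (add_mul_sub_mem_Ioc o hq)

lemma equivS_of_forall_eval_eq {X : Type} (f g : S X)
    (h : ∀ q ∈ Ioc (0 : ℚ) 1, eval f q = eval g q) : equivS f g :=
  foldStar_of_forall_eval _ fun q hq => by
    simpa only [map2, eval_ap _ _ hq, eval_mapS] using h q hq

end S

/-- The combinators C, K and W are preserved by the step-function applicative
functor, up to the lifted equality. -/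
theorem step_combinator_laws {X Y Z : Type} (f : S (X → Y → Z)) (x : S X) (y : S Y)
    (g : S (X → X → Y)) :
    (∀ (x' : S X) (y' : S Y),
      equivS
        (ap (ap (ap (S.const (fun (h : X → Y → Z) (b : Y) (a : X) => h a b)) f) y') x')
        (ap (ap f x') y')) ∧
    equivS (ap (mapS (fun (a : X) (_ : Y) => a) x) y) x ∧
    equivS (ap (ap (S.const (fun (h : X → X → Y) (a : X) => h a a)) g) x)
      (ap (ap g x) x) := by
  refine ⟨fun x' y' => ?_, ?_, ?_⟩ <;>
    refine equivS_of_forall_eval_eq _ _ fun q hq => ?_ <;>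
    simp only [eval_ap _ _ hq, eval_mapS, eval_const]
end

section
/- (Uniform continuity of map on step functions with the sup metric) Let f : ℚ → ℚ be uniformly continuous with modulus μ : {q : ℚ // 0 < q} → {q : ℚ // 0 < q}, i.e. for all x y : ℚ and ε, |x − y| ≤ μ ε → |f x − f y| ≤ ε. Then the lifted map on rational step functions is uniformly continuous with the same modulus for the sup metric: for all s, t : S ℚ and all ε, d∞ s t ≤ μ ε → d∞ (map f s) (map f t) ≤ ε. -/
set_option linter.unusedVariables false

open S

lemma mapS_mapS {X Y Z : Type} (g : Y → Z) (f : X → Y) (s : S X) :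
    mapS g (mapS f s) = mapS (g ∘ f) s := by
  induction s with
  | const x => rfl
  | glue o l r ihl ihr => simp [mapS, ihl, ihr]

lemma splitL_mapS {X Y : Type} (f : X → Y) (t : S X) (a : OO) :
    splitL (mapS f t) a = mapS f (splitL t a) := by
  induction t generalizing a with
  | const x => rfl
  | glue o l r ihl ihr =>
    simp only [mapS, splitL]
    split_ifs with h h'
    · exact ihl _
    · simp [mapS, ihr]
    · rfl

lemma splitR_mapS {X Y : Type} (f : X → Y) (t : S X) (a : OO) :
    splitR (mapS f t) a = mapS f (splitR t a) := by
  induction t generalizing a with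
  | const x => rfl
  | glue o l r ihl ihr =>
    simp only [mapS, splitR]
    split_ifs with h h'
    · simp [mapS, ihl]
    · exact ihr _
    · rfl

lemma ap_mapS {X Y Z : Type} (F : S (Y → Z)) (f : X → Y) (t : S X) :
    ap F (mapS f t) = ap (mapS (fun φ => φ ∘ f) F) t := by
  induction F generalizing t with
  | const φ => exact (mapS_mapS φ f t)
  | glue o l r ihl ihr =>
    simp only [ap, mapS, splitL_mapS, splitR_mapS, ihl, ihr]

lemma normInf_glue (o : OO) (l r : S ℚ) :
    normInf (glue o l r) = max (normInf l) (normInf r) := rfl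

lemma apS_bound (g h : ℚ → ℚ → ℚ) (c e : ℚ)
    (hp : ∀ a b, |g a b| ≤ c → |h a b| ≤ e) :
    ∀ (s t : S ℚ), normInf (ap (mapS g s) t) ≤ c → normInf (ap (mapS h s) t) ≤ e := by
  intro s
  induction s with
  | const a =>
    intro t
    induction t with
    | const b => exact hp a b
    | glue o l r ihl ihr =>
      simp only [mapS, ap, normInf_glue, max_le_iff]
      exact fun hc => ⟨ihl hc.1, ihr hc.2⟩
  | glue o sl sr ihl ihr =>
    intro t
    simp only [mapS, ap, normInf_glue, max_le_iff]
    exact fun hc => ⟨ihl _ hc.1, ihr _ hc.2⟩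

/-- If `f : ℚ → ℚ` is uniformly continuous with modulus `μ`, then `map f` on
rational step functions is uniformly continuous with the same modulus for the
sup metric. -/
theorem mapS_uniformly_continuous (f : ℚ → ℚ)
    (μ : {q : ℚ // 0 < q} → {q : ℚ // 0 < q})
    (hf : ∀ (x y : ℚ) (ε : {q : ℚ // 0 < q}), |x - y| ≤ (μ ε).1 → |f x - f y| ≤ ε.1) :
    ∀ (s t : S ℚ) (ε : {q : ℚ // 0 < q}),
      dInf s t ≤ (μ ε).1 → dInf (mapS f s) (mapS f t) ≤ ε.1 := by
  intro s t ε h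
  have e1 : map2 (· - ·) (mapS f s) (mapS f t)
      = ap (mapS (fun a b => f a - f b) s) t := by
    show ap (mapS (· - ·) (mapS f s)) (mapS f t) = _
    rw [mapS_mapS, ap_mapS, mapS_mapS]
    rfl
  have e2 : map2 (· - ·) s t = ap (mapS (fun a b => a - b) s) t := rfl
  unfold dInf at *
  rw [e1]
  rw [e2] at h
  exact apS_bound _ _ _ _ (fun a b => hf a b ε) s t h
end
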